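/- If S₀ is a separating set of G, then S₀ × {a, b} is a separating set of G × K₂ whenever G is connected and non-bipartite; hence κ(G × K₂) ≤ 2κ(G). -/

import Mathlib

open SimpleGraph

universe u v

/-- Kronecker (direct / tensor) product of two simple graphs. -/
def SimpleGraph.tensor {V : Type u} {W : Type v} (G : SimpleGraph V) (H : SimpleGraph W) :
    SimpleGraph (V × W) where
  Adj p q := G.Adj p.1 q.1 ∧ H.Adj p.2 q.2
  symm := ⟨fun _ _ h => ⟨h.1.symm, h.2.symm⟩⟩
  loopless := ⟨fun _ h => G.loopless.irrefl _ h.1⟩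

/-- `G × K₂`, realized on `V × Bool` (where `false` plays the role of `a` and `true` of `b`):
`(u,x)` is adjacent to `(v,y)` iff `uv ∈ E(G)` and `x ≠ y`. -/
def timesK2 {V : Type u} (G : SimpleGraph V) : SimpleGraph (V × Bool) :=
  G.tensor ⊤

/-- `C` is (the vertex set of) a connected component of the graph `H`. -/
def IsComp {α : Type u} (H : SimpleGraph α) (C : Set α) : Prop :=
  ∃ K : H.ConnectedComponent, C = K.supp

/-- `C ⊆ V` is (the vertex set of) a connected component of the induced subgraph `G[s]`. -/
def IsCompOf {V : Type u} (G : SimpleGraph V) (s C : Set V) : Prop :=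
  ∃ K : (G.induce s).ConnectedComponent, C = Subtype.val '' K.supp

/-- `(X, Y)` is a b-pair of `G`: `X` and `Y` are disjoint, `V(G) - (X ∪ Y)` is nonempty,
`G - (X ∪ Y)` has a bipartite component `C`, and `G[V(C) ∪ {x}]` is bipartite
for each `x ∈ X`.  (Bipartite = 2-colorable.) -/
def IsBPair {V : Type u} (G : SimpleGraph V) (X Y : Set V) : Prop :=
  Disjoint X Y ∧ ((X ∪ Y)ᶜ : Set V).Nonempty ∧
    ∃ C : Set V, IsCompOf G ((X ∪ Y)ᶜ) C ∧ (G.induce C).Colorable 2 ∧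
      ∀ x ∈ X, (G.induce (C ∪ {x})).Colorable 2

/-- `b(G) = min{|X| + 2|Y| : (X,Y) is a b-pair of G}`. -/
noncomputable def bInv {V : Type u} (G : SimpleGraph V) : ℕ :=
  sInf {n | ∃ X Y : Set V, IsBPair G X Y ∧ n = X.ncard + 2 * Y.ncard}

/-- `S` is a separating set of `G`: removing `S` leaves a disconnected graph,
or a graph with at most one vertex. -/
def IsSeparating {V : Type u} (G : SimpleGraph V) (S : Set V) : Prop :=
  ¬ (G.induce Sᶜ).Connected ∨ (Sᶜ : Set V).Subsingleton

/-- The vertex connectivity `κ(G)`: the fewest number of vertices whose removal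
disconnects `G` or leaves at most a single vertex. -/
noncomputable def kappa {V : Type u} (G : SimpleGraph V) : ℕ :=
  sInf {n | ∃ S : Set V, IsSeparating G S ∧ n = S.ncard}

/-- The quotient-like graph `G*` whose vertices are the nonempty classes
`S'_u = ({u} × {a,b}) − S` (indexed by `u ∈ V(G)`), with `S'_u ~ S'_v` iff
`G × K₂ − S` has an edge with one end in `S'_u` and the other in `S'_v`. -/
def starGraph {V : Type u} (G : SimpleGraph V) (S : Set (V × Bool)) : SimpleGraph V where
  Adj u v := u ≠ v ∧ ∃ x y : Bool, (u, x) ∉ S ∧ (v, y) ∉ S ∧ (timesK2 G).Adj (u, x) (v, y)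
  symm := by
    constructor
    rintro u v ⟨h, x, y, hx, hy, hadj⟩
    exact ⟨h.symm, y, x, hy, hx, hadj.symm⟩
  loopless := ⟨fun u h => h.1 rfl⟩

/-! The projection `(u, w) ↦ u` is a homomorphism from `G ⊗ H - S₀ × W` onto `G - S₀`, so
connectivity of the former would pass to the latter; and when `G - S₀` is a single vertex, the
vertices above it are pairwise non-adjacent. Taking `S₀` of size `κ(G)` bounds `κ(G ⊗ H)`. -/

section Tensor

variable {V : Type u} {W : Type v} {G : SimpleGraph V} {S₀ : Set V}

lemma isSeparating_univ (G : SimpleGraph V) : IsSeparating G Set.univ :=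
  Or.inr (by simp)

lemma kappa_le_ncard {S : Set V} (hS : IsSeparating G S) : kappa G ≤ S.ncard :=
  Nat.sInf_le ⟨S, hS, rfl⟩

lemma exists_isSeparating_ncard_eq_kappa (G : SimpleGraph V) :
    ∃ S, IsSeparating G S ∧ S.ncard = kappa G := by
  obtain ⟨S, hS, hcard⟩ := Nat.sInf_mem (s := {n | ∃ S : Set V, IsSeparating G S ∧ n = S.ncard})
    ⟨_, Set.univ, isSeparating_univ G, rfl⟩
  exact ⟨S, hS, hcard.symm⟩

def induceTensorFst (H : SimpleGraph W) (S₀ : Set V) :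
    (G.tensor H).induce (S₀ ×ˢ Set.univ)ᶜ →g G.induce S₀ᶜ where
  toFun p := ⟨p.1.1, fun h => p.2 ⟨h, trivial⟩⟩
  map_rel' h := h.1

lemma induceTensorFst_surjective [Nonempty W] (H : SimpleGraph W) (S₀ : Set V) :
    Function.Surjective (induceTensorFst (G := G) H S₀) := fun u =>
  ⟨⟨(u.1, Classical.arbitrary W), fun h => u.2 h.1⟩, rfl⟩

lemma IsSeparating.tensor (H : SimpleGraph W) (hsep : IsSeparating G S₀) :
    IsSeparating (G.tensor H) (S₀ ×ˢ Set.univ) := by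
  by_cases hsub : ((S₀ ×ˢ Set.univ)ᶜ : Set (V × W)).Subsingleton
  · exact Or.inr hsub
  refine Or.inl fun hconn => ?_
  obtain ⟨⟨p, hp⟩⟩ := hconn.nonempty
  have : Nonempty W := ⟨p.2⟩
  rcases hsep with hdis | hS₀
  · exact hdis (hconn.map _ (induceTensorFst_surjective H S₀))
  · have : Nontrivial ((S₀ ×ˢ Set.univ)ᶜ : Set (V × W)) :=
      Set.nontrivial_coe_sort.mpr (Set.not_subsingleton_iff.mp hsub)
    have : Subsingleton (S₀ᶜ : Set V) := hS₀.coe_sort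
    obtain ⟨q, hpq⟩ := hconn.preconnected.exists_adj_of_nontrivial ⟨p, hp⟩
    exact ((induceTensorFst H S₀).map_adj hpq).ne (Subsingleton.elim _ _)

lemma kappa_tensor_le (G : SimpleGraph V) (H : SimpleGraph W) :
    kappa (G.tensor H) ≤ kappa G * Nat.card W := by
  obtain ⟨S, hS, hcard⟩ := exists_isSeparating_ncard_eq_kappa G
  calc kappa (G.tensor H) ≤ (S ×ˢ (Set.univ : Set W)).ncard := kappa_le_ncard (hS.tensor H)
    _ = kappa G * Nat.card W := by rw [Set.ncard_prod, Set.ncard_univ, hcard]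

end Tensor

theorem stmt_18_general {V : Type u} (G : SimpleGraph V)
    (S₀ : Set V) (hsep : IsSeparating G S₀) :
    IsSeparating (timesK2 G) (S₀ ×ˢ (Set.univ : Set Bool)) ∧
    kappa (timesK2 G) ≤ 2 * kappa G :=
  ⟨hsep.tensor ⊤, by
    rw [mul_comm, ← Fintype.card_bool, ← Nat.card_eq_fintype_card]
    exact kappa_tensor_le G ⊤⟩

/-- If `G` is connected and non-bipartite and `S₀` is a separating set of `G`, then
`S₀ × {a,b}` is a separating set of `G × K₂`; hence `κ(G × K₂) ≤ 2κ(G)`. -/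
theorem stmt_18 {V : Type u} [Fintype V] (G : SimpleGraph V)
    (hconn : G.Connected) (hnbip : ¬ G.Colorable 2)
    (S₀ : Set V) (hsep : IsSeparating G S₀) :
    IsSeparating (timesK2 G) (S₀ ×ˢ (Set.univ : Set Bool)) ∧
    kappa (timesK2 G) ≤ 2 * kappa G :=
  stmt_18_general G S₀ hsep
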